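/- Let m ≥ 2. Then the following recurrences hold. (Even case, N = 2m:) for every y : Z_{2m,±} → F_2, letting y' denote the restriction of y to Z_{2m−1,±} = {−m+1, …, m−1}, one has G_{2m}(y) = G_{2m−1}(y') + (∏_{k=−m+2}^{−1} y_k) · (∏_{k=1}^{m−1} y_k) · (y_m + 1) · (y_0 + y_{−m+1}) in F_2. (Odd case, N = 2m+1:) for every y : Z_{2m+1,±} → F_2, letting y' denote the restriction of y to Z_{2m,±} = {−m+1, …, m}, one has G_{2m+1}(y) = G_{2m}(y') + (∏_{k=−m+1}^{−1} y_k) · (∏_{k=1}^{m−1} y_k) · (y_{−m} + 1) · (y_0 + y_m) in F_2. -/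

import Mathlib

namespace Rhythm

/-- `a +_N b`, addition on `Z_N = {0,…,N−1}`. -/
def addN (N a b : ℕ) : ℕ := (a + b) % N

/-- `a −_N b`, subtraction on `Z_N = {0,…,N−1}`. -/
def subN (N a b : ℕ) : ℕ := (a + N - b) % N

/-- The discrete average `av(a,b) = a +_N ⌊(b −_N a)/2⌋`. -/
def av (N a b : ℕ) : ℕ := addN N a (subN N b a / 2)

/-- The cyclic interval `[a,b]_{Z_N}`. -/
def cyclicIcc (N a b : ℕ) : Finset ℕ :=
  if a ≤ b then Finset.Icc a b else Finset.Icc a (N - 1) ∪ Finset.Icc 0 b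

/-- The half-open cyclic interval `[a,b)_{Z_N} = [a,b]_{Z_N} \ {b}`. -/
def cyclicIco (N a b : ℕ) : Finset ℕ := (cyclicIcc N a b).erase b

/-- The half-open cyclic interval `(a,b]_{Z_N} = [a,b]_{Z_N} \ {a}`. -/
def cyclicIoc (N a b : ℕ) : Finset ℕ := (cyclicIcc N a b).erase a

/-- Cyclic successor `⟨i+1⟩_n` on `Fin n`. -/
def csucc {n : ℕ} (i : Fin n) : Fin n := ⟨(i.val + 1) % n, Nat.mod_lt _ i.pos⟩

/-- Cyclic predecessor `⟨i−1⟩_n` on `Fin n`. -/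
def cpred {n : ℕ} (i : Fin n) : Fin n := ⟨(i.val + (n - 1)) % n, Nat.mod_lt _ i.pos⟩

/-- `a ∈ R_N^n`: entries in `Z_N`, pairwise distinct, and `Σ_i (a_{⟨i+1⟩_n} −_N a_i) = N`. -/
def IsRhythm (N : ℕ) {n : ℕ} (a : Fin n → ℕ) : Prop :=
  (∀ i, a i < N) ∧ Function.Injective a ∧ (∑ i, subN N (a (csucc i)) (a i)) = N

/-- The discrete average transformation `Rav`. -/
def Rav (N : ℕ) {n : ℕ} (a : Fin n → ℕ) : Fin n → ℕ := fun i => av N (a i) (a (csucc i))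

/-- The rotation `rot(a_0,…,a_{n−1}) = (a_{n−1},a_0,…,a_{n−2})`. -/
def rot {n : ℕ} (a : Fin n → ℕ) : Fin n → ℕ := fun i => a (cpred i)

/-- The translation `tr(a_0,…,a_{n−1}) = (a_0 +_N 1,…,a_{n−1} +_N 1)`. -/
def tr (N : ℕ) {n : ℕ} (a : Fin n → ℕ) : Fin n → ℕ := fun i => addN N (a i) 1

/-- `j` is the jumping number of `a`: `a_{⟨j−1⟩_n} > a_j` and `a_{⟨k−1⟩_n} < a_k` for `k ≠ j`. -/
def IsJump {n : ℕ} (a : Fin n → ℕ) (j : Fin n) : Prop :=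
  a (cpred j) > a j ∧ ∀ k, k ≠ j → a (cpred k) < a k

/-- The map `Iav`: for `n ≥ 2` it is `Rav` if `a` is proper (`N − a_{n−1} > a_0`) and
`rot ∘ Rav` otherwise; for `n ≤ 1` it is the identity. -/
def Iav (N : ℕ) {n : ℕ} (a : Fin n → ℕ) : Fin n → ℕ :=
  if h : 2 ≤ n then
    if N - a ⟨n - 1, by omega⟩ > a ⟨0, by omega⟩ then Rav N a else rot (Rav N a)
  else a

/-- The support of a Boolean vector `v ∈ F_2^N`. -/
def supp (N : ℕ) (v : Fin N → ZMod 2) : Finset (Fin N) :=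
  Finset.univ.filter fun i => v i = 1

/-- `BtoI(v)`: the increasing enumeration of the support of `v`. -/
def BtoI (N : ℕ) (v : Fin N → ZMod 2) : Fin (supp N v).card → ℕ :=
  fun i => (((supp N v).orderIsoOfFin rfl) i).1.val

/-- `ItoB(b)`: the characteristic vector of the set of entries of the tuple `b`. -/
def ItoB (N : ℕ) {n : ℕ} (b : Fin n → ℕ) : Fin N → ZMod 2 :=
  fun i => if ∃ k, b k = i.val then 1 else 0

/-- The Boolean average `Bav = ItoB ∘ Iav ∘ BtoI : B_N → B_N`. -/
def Bav (N : ℕ) (v : Fin N → ZMod 2) : Fin N → ZMod 2 :=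
  ItoB N (Iav N (BtoI N v))

/-- The cyclic shift `Btr(v_0,…,v_{N−1}) = (v_{N−1},v_0,…,v_{N−2})`. -/
def Btr (N : ℕ) (v : Fin N → ZMod 2) : Fin N → ZMod 2 := fun i => v (cpred i)

/-- `Par_N`: the set of parental pairs of zero, i.e. pairs `(a,b) ∈ Z_N × Z_N` with `av(a,b) = 0`. -/
def Par (N : ℕ) : Finset (ℕ × ℕ) :=
  (Finset.range N ×ˢ Finset.range N).filter fun p => av N p.1 p.2 = 0

/-- The least absolute remainder `φ_N(i) ∈ Z_{N,±}` of `i ∈ Z_N`. -/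
def toSigned (N : ℕ) (i : Fin N) : ℤ :=
  if (i : ℕ) ≤ N / 2 then (i : ℤ) else (i : ℤ) - N

/-- `G_N(y) = Bav_N^0(v)` where `v_{⟨j⟩_N} = 1 + y_j` for `j ∈ Z_{N,±}`. -/
def G (N : ℕ) (y : ℤ → ZMod 2) : ZMod 2 :=
  if h : 0 < N then Bav N (fun i => 1 + y (toSigned N i)) ⟨0, h⟩ else 0

end Rhythm

/-!
Put `v = 1 + y ∘ toSigned`, whose support is `{t | y t = 0}` in signed coordinates.
`Bav(v)_0 = 1` iff two cyclically consecutive points `a, b` of the support have average `0`.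
If `d` is the forward distance from `a` to `b`, this forces `a = -⌊d/2⌋` and `b = ⌈d/2⌉` in
signed coordinates, so the condition says that `y` vanishes at these two points and is `1`
strictly between them. Distinct `d < N` give incompatible conditions, hence `G_N` is the sum
over `d < N` of their polynomial indicators. For `d ≥ 1` the indicator does not depend on `N`,
so `G_{N+1} - G_N` consists of the new term `d = N` and of the change in the term `d = 0`,
`(1 + y_0) ∏_{t ∈ Z_{N,±}, t ≠ 0} y_t`; the recurrences are these identities in characteristic
two.
-/

namespace Rhythm

open Finset

variable {N : ℕ}

lemma zmod2_eq_zero_or_eq_one (a : ZMod 2) : a = 0 ∨ a = 1 := by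
  revert a; decide

lemma zmod2_one_add_eq_one_iff {a : ZMod 2} : 1 + a = 1 ↔ a = 0 := by
  revert a; decide

lemma zmod2_mul_eq_one_iff {a b : ZMod 2} : a * b = 1 ↔ a = 1 ∧ b = 1 := by
  revert a b; decide

lemma zmod2_eq_of_eq_one_iff {a b : ZMod 2} (h : a = 1 ↔ b = 1) : a = b := by
  revert a b; decide

lemma zmod2_prod_eq_one_iff {ι : Type*} (s : Finset ι) (f : ι → ZMod 2) :
    ∏ i ∈ s, f i = 1 ↔ ∀ i ∈ s, f i = 1 := by
  refine ⟨fun h i hi => ?_, prod_eq_one⟩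
  by_contra hfi
  rw [prod_eq_zero hi ((zmod2_eq_zero_or_eq_one (f i)).resolve_right hfi)] at h
  exact zero_ne_one h

lemma zmod2_sum_eq_one_iff {ι : Type*} {s : Finset ι} {f : ι → ZMod 2}
    (huniq : ∀ i ∈ s, ∀ j ∈ s, f i = 1 → f j = 1 → i = j) :
    ∑ i ∈ s, f i = 1 ↔ ∃ i ∈ s, f i = 1 := by
  constructor
  · intro h
    by_contra! hnone
    rw [sum_eq_zero fun i hi => (zmod2_eq_zero_or_eq_one (f i)).resolve_right (hnone i hi)] at h
    exact zero_ne_one h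
  · rintro ⟨i, hi, hfi⟩
    rw [sum_eq_single_of_mem i hi fun j hj hji =>
      (zmod2_eq_zero_or_eq_one (f j)).resolve_right fun hfj => hji (huniq j hj i hi hfj hfi)]
    exact hfi

/-- `Z_{N,±}`, the least absolute remainders modulo `N`. -/
noncomputable def signedRange (N : ℕ) : Finset ℤ := Icc (-(((N : ℤ) - 1) / 2)) ((N : ℤ) / 2)

lemma mem_signedRange {t : ℤ} : t ∈ signedRange N ↔ -(((N : ℤ) - 1) / 2) ≤ t ∧ t ≤ (N : ℤ) / 2 :=
  mem_Icc

lemma toSigned_mem_signedRange (i : Fin N) : toSigned N i ∈ signedRange N := by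
  have := i.isLt
  rw [mem_signedRange, toSigned]
  split_ifs <;> omega

lemma toSigned_modEq (i : Fin N) : toSigned N i ≡ i [ZMOD N] := by
  rw [toSigned]
  split_ifs
  · rfl
  · exact Int.sub_emod_right _ _

lemma eq_of_modEq_of_mem_signedRange {s t : ℤ} (hs : s ∈ signedRange N) (ht : t ∈ signedRange N)
    (h : s ≡ t [ZMOD N]) : s = t := by
  rw [mem_signedRange] at hs ht
  have := Int.eq_zero_of_abs_lt_dvd h.dvd (abs_lt.mpr ⟨by omega, by omega⟩)
  omega

lemma toSigned_eq_iff {i : Fin N} {t : ℤ} (ht : t ∈ signedRange N) :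
    toSigned N i = t ↔ (i : ℤ) ≡ t [ZMOD N] :=
  ⟨fun h => h ▸ (toSigned_modEq i).symm, fun h =>
    eq_of_modEq_of_mem_signedRange (toSigned_mem_signedRange i) ht ((toSigned_modEq i).trans h)⟩

lemma exists_toSigned_eq {t : ℤ} (ht : t ∈ signedRange N) : ∃ i : Fin N, toSigned N i = t := by
  have hN : (0 : ℤ) < N := by rw [mem_signedRange] at ht; omega
  have h0 := Int.emod_nonneg t hN.ne'
  have hlt := Int.emod_lt_of_pos t hN
  refine ⟨⟨(t % N).toNat, by omega⟩, (toSigned_eq_iff ht).mpr ?_⟩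
  simp only [Int.toNat_of_nonneg h0]
  exact Int.mod_modEq t N

lemma natCast_subN {a : ℕ} (b : ℕ) (ha : a ≤ N) : (subN N b a : ℤ) = ((b : ℤ) - a) % N := by
  rw [subN, Int.natCast_mod, Nat.cast_sub (by omega), Nat.cast_add, add_sub_right_comm,
    Int.add_emod_right]

lemma subN_modEq_toSigned (a b : Fin N) :
    (subN N b a : ℤ) ≡ toSigned N b - toSigned N a [ZMOD N] := by
  rw [natCast_subN b a.isLt.le]
  exact (Int.mod_modEq _ _).trans ((toSigned_modEq b).sub (toSigned_modEq a)).symm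

lemma addN_eq_zero_iff {a c : ℕ} : addN N a c = 0 ↔ (a : ℤ) + c ≡ 0 [ZMOD N] := by
  rw [addN, Int.ModEq, Int.zero_emod, ← Nat.cast_add, ← Int.natCast_mod]
  exact Int.natCast_eq_zero.symm

lemma neg_half_mem_signedRange {d : ℕ} (hd : d < N) : -((d : ℤ) / 2) ∈ signedRange N := by
  rw [mem_signedRange]; omega

lemma half_succ_mem_signedRange {d : ℕ} (hd : d < N) : ((d : ℤ) + 1) / 2 ∈ signedRange N := by
  rw [mem_signedRange]; omega

lemma av_eq_zero_iff (a b : Fin N) :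
    av N a b = 0 ↔ ∃ d < N, toSigned N a = -((d : ℤ) / 2) ∧ toSigned N b = ((d : ℤ) + 1) / 2 := by
  have hgap := subN_modEq_toSigned a b
  rw [av, addN_eq_zero_iff]
  constructor
  · intro h
    set d := subN N b a
    have hd : d < N := Nat.mod_lt _ (Fin.pos a)
    have ha : toSigned N a = -((d : ℤ) / 2) := by
      refine (toSigned_eq_iff (neg_half_mem_signedRange hd)).mpr ?_
      simpa using h.sub_right ((d / 2 : ℕ) : ℤ)
    refine ⟨d, hd, ha, (toSigned_eq_iff (half_succ_mem_signedRange hd)).mpr ?_⟩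
    calc (b : ℤ) ≡ toSigned N b [ZMOD N] := (toSigned_modEq b).symm
      _ = (toSigned N b - toSigned N a) + toSigned N a := by ring
      _ ≡ d + toSigned N a [ZMOD N] := hgap.symm.add_right _
      _ = ((d : ℤ) + 1) / 2 := by rw [ha]; omega
  · rintro ⟨d, hd, ha, hb⟩
    have hsub : subN N b a = d := by
      refine (Int.natCast_modEq_iff.mp (hgap.trans ?_)).eq_of_lt_of_lt (Nat.mod_lt _ (Fin.pos a)) hd
      rw [ha, hb, show ((d : ℤ) + 1) / 2 - -((d : ℤ) / 2) = d by omega]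
    rw [hsub]
    calc (a : ℤ) + ((d / 2 : ℕ) : ℤ) ≡ toSigned N a + ((d / 2 : ℕ) : ℤ) [ZMOD N] :=
          (toSigned_modEq a).symm.add_right _
      _ = 0 := by rw [ha]; omega

section Support

lemma subN_of_le {a b : ℕ} (hab : a ≤ b) (hb : b < N) : subN N b a = b - a := by
  rw [subN, show b + N - a = b - a + N by omega, Nat.add_mod_right, Nat.mod_eq_of_lt (by omega)]

lemma subN_of_lt {a b : ℕ} (hba : b < a) (ha : a ≤ N) : subN N b a = b + N - a :=
  Nat.mod_eq_of_lt (by omega)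

lemma subN_left_inj {a b b' : ℕ} (ha : a ≤ N) (hb : b < N) (hb' : b' < N) :
    subN N b a = subN N b' a ↔ b = b' := by
  refine ⟨fun h => ?_, fun h => h ▸ rfl⟩
  have h' : b + (N - a) ≡ b' + (N - a) [MOD N] := by
    rwa [← Nat.add_sub_assoc ha, ← Nat.add_sub_assoc ha]
  exact (Nat.ModEq.add_right_cancel' _ h').eq_of_lt_of_lt hb hb'

variable (v : Fin N → ZMod 2)

lemma BtoI_lt (k : Fin (supp N v).card) : BtoI N v k < N :=
  (((supp N v).orderIsoOfFin rfl) k).1.isLt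

lemma BtoI_strictMono : StrictMono (BtoI N v) :=
  fun _ _ hij => ((supp N v).orderIsoOfFin rfl).strictMono hij

lemma exists_BtoI_eq_iff (x : Fin N) : (∃ k, BtoI N v k = x) ↔ v x = 1 := by
  constructor
  · rintro ⟨k, hk⟩
    have hmem := (((supp N v).orderIsoOfFin rfl) k).2
    rw [show (((supp N v).orderIsoOfFin rfl) k : Fin N) = x from Fin.ext hk] at hmem
    simpa [supp] using hmem
  · intro hx
    obtain ⟨k, hk⟩ := ((supp N v).orderIsoOfFin rfl).surjective ⟨x, by simpa [supp] using hx⟩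
    exact ⟨k, by rw [BtoI, hk]⟩

/-- `z` is the first point of the support after `x` in the cyclic order. Distances are measured
from `x + 1`, so that `x` itself is the farthest point and `z = x` when the support is `{x}`. -/
def IsNextInSupp (x z : Fin N) : Prop :=
  v x = 1 ∧ v z = 1 ∧ ∀ j : Fin N, v j = 1 → subN N z (x + 1) ≤ subN N j (x + 1)

lemma subN_BtoI_csucc_le (k : Fin (supp N v).card) {j : Fin N} (hj : v j = 1) :
    subN N (BtoI N v (csucc k)) (BtoI N v k + 1) ≤ subN N j (BtoI N v k + 1) := by
  obtain ⟨i, hi⟩ := (exists_BtoI_eq_iff v j).mpr hj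
  rw [← hi]
  have hlt := BtoI_lt v
  have hmono := (BtoI_strictMono v).monotone
  have hx := hlt k
  by_cases hk : (k : ℕ) + 1 < (supp N v).card
  -- every point of the support is `≤ x` or `≥ z`
  · rw [show csucc k = ⟨k + 1, hk⟩ from Fin.ext (Nat.mod_eq_of_lt hk)]
    have hxz : BtoI N v k < BtoI N v ⟨k + 1, hk⟩ :=
      BtoI_strictMono v (Fin.lt_def.mpr (Nat.lt_succ_self _))
    have hz := hlt ⟨k + 1, hk⟩
    rw [subN_of_le hxz hz]
    rcases le_or_gt i k with hik | hki
    · have := hmono hik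
      rw [subN_of_lt (by omega) (by omega)]
      omega
    · have := hmono (show (⟨k + 1, hk⟩ : Fin _) ≤ i from Fin.le_def.mpr hki)
      rw [subN_of_le (by omega) (hlt i)]
      omega
  -- `x` is the largest point of the support and `z` the smallest
  · have hlast : (k : ℕ) + 1 = (supp N v).card := by omega
    rw [show csucc k = ⟨0, k.pos⟩ from Fin.ext (by simp [csucc, hlast])]
    have h0 := hmono (show (⟨0, k.pos⟩ : Fin _) ≤ i from Fin.le_def.mpr (Nat.zero_le _))
    have hik := hmono (show i ≤ k from Fin.le_def.mpr (by omega))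
    rw [subN_of_lt (a := BtoI N v k + 1) (by omega) (by omega),
      subN_of_lt (a := BtoI N v k + 1) (by omega) (by omega)]
    omega

lemma exists_BtoI_csucc_iff (x z : Fin N) :
    (∃ k, BtoI N v k = x ∧ BtoI N v (csucc k) = z) ↔ IsNextInSupp v x z := by
  constructor
  · rintro ⟨k, hx, hz⟩
    refine ⟨(exists_BtoI_eq_iff v x).mp ⟨k, hx⟩, (exists_BtoI_eq_iff v z).mp ⟨_, hz⟩,
      fun j hj => ?_⟩
    rw [← hx, ← hz]
    exact subN_BtoI_csucc_le v k hj
  · rintro ⟨hx, hz, hmin⟩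
    obtain ⟨k, hk⟩ := (exists_BtoI_eq_iff v x).mpr hx
    refine ⟨k, hk, ?_⟩
    have hz' := (exists_BtoI_eq_iff v ⟨_, BtoI_lt v (csucc k)⟩).mp ⟨_, rfl⟩
    have hle := subN_BtoI_csucc_le v k hz
    rw [hk] at hle
    exact (subN_left_inj x.isLt (BtoI_lt v _) z.isLt).mp (hle.antisymm (hmin _ hz'))

end Support

lemma av_self {c : ℕ} (hc : c < N) : av N c c = c := by
  rw [av, addN, subN, Nat.add_sub_cancel_left, Nat.mod_self, Nat.zero_div, Nat.add_zero,
    Nat.mod_eq_of_lt hc]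

lemma cpred_surjective {n : ℕ} : Function.Surjective (cpred : Fin n → Fin n) := by
  intro k
  refine ⟨csucc k, Fin.ext ?_⟩
  have := k.pos
  rw [cpred, csucc, Fin.val_mk, Nat.mod_add_mod,
    show (k : ℕ) + 1 + (n - 1) = k + n by omega, Nat.add_mod_right, Nat.mod_eq_of_lt k.isLt]

/-- `rot` only permutes the entries, and for `n ≤ 1` the lone entry is its own average. -/
lemma range_Iav {n : ℕ} {a : Fin n → ℕ} (ha : ∀ i, a i < N) :
    Set.range (Iav N a) = Set.range (Rav N a) := by
  unfold Iav
  split_ifs with hn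
  · rfl
  · exact cpred_surjective.range_comp _
  · have : Subsingleton (Fin n) := Fin.subsingleton_iff_le_one.mpr (by omega)
    congr
    funext i
    rw [Rav, Subsingleton.elim (csucc i) i, av_self (ha i)]

lemma Bav_apply_eq_one_iff (v : Fin N → ZMod 2) (i : Fin N) :
    Bav N v i = 1 ↔ ∃ k, Rav N (BtoI N v) k = i := by
  rw [← Set.mem_range, ← range_Iav (BtoI_lt v), Set.mem_range, Bav, ItoB]
  split_ifs with h
  · exact iff_of_true rfl h
  · exact iff_of_false zero_ne_one h

lemma Bav_zero_eq_one_iff (hN : 0 < N) (v : Fin N → ZMod 2) :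
    Bav N v ⟨0, hN⟩ = 1 ↔ ∃ x z : Fin N, IsNextInSupp v x z ∧ av N x z = 0 := by
  rw [Bav_apply_eq_one_iff]
  constructor
  · rintro ⟨k, hk⟩
    exact ⟨⟨_, BtoI_lt v k⟩, ⟨_, BtoI_lt v (csucc k)⟩,
      (exists_BtoI_csucc_iff v _ _).mp ⟨k, rfl, rfl⟩, hk⟩
  · rintro ⟨x, z, hxz, h0⟩
    obtain ⟨k, hx, hz⟩ := (exists_BtoI_csucc_iff v x z).mpr hxz
    exact ⟨k, by rw [Rav, hx, hz, h0]⟩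

/-- The signed coordinates `-⌊d/2⌋` and `⌈d/2⌉` of the pair with gap `d` and average `0`. -/
def gapEnds (d : ℕ) : Finset ℤ := {-((d : ℤ) / 2), ((d : ℤ) + 1) / 2}

/-- The open cyclic arc between the two points of `gapEnds d`; for `d = 0` both are `0` and
the arc is the rest of the cycle. -/
noncomputable def gapArc (N d : ℕ) : Finset ℤ :=
  if d = 0 then (signedRange N).erase 0 else Ioo (-((d : ℤ) / 2)) (((d : ℤ) + 1) / 2)

lemma gapArc_subset {d : ℕ} (hd : d < N) : gapArc N d ⊆ signedRange N := by
  unfold gapArc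
  split_ifs
  · exact erase_subset _ _
  · intro t ht
    rw [mem_Ioo] at ht
    rw [mem_signedRange]
    omega

lemma emod_eq_add_of_neg {e n : ℤ} (h₁ : -n ≤ e) (h₂ : e < 0) : e % n = e + n := by
  rw [← Int.add_emod_right]
  exact Int.emod_eq_of_lt (by omega) (by omega)

lemma natCast_subN_succ (x b : Fin N) :
    (subN N b (x + 1) : ℤ) = (toSigned N b - toSigned N x - 1) % N := by
  rw [natCast_subN b x.isLt, Nat.cast_succ, ← sub_sub]
  exact ((toSigned_modEq b).symm.sub (toSigned_modEq x).symm).sub_right 1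

lemma subN_le_subN_iff {x z : Fin N} {d : ℕ} (hd : d < N) (hx : toSigned N x = -((d : ℤ) / 2))
    (hz : toSigned N z = ((d : ℤ) + 1) / 2) (j : Fin N) :
    subN N z (x + 1) ≤ subN N j (x + 1) ↔ toSigned N j ∉ gapArc N d := by
  have hj := mem_signedRange.mp (toSigned_mem_signedRange j)
  rw [← Nat.cast_le (α := ℤ), natCast_subN_succ, natCast_subN_succ, hx, hz,
    show ((d : ℤ) + 1) / 2 - -((d : ℤ) / 2) - 1 = d - 1 by omega]
  have hN : (0 : ℤ) < N := by omega
  unfold gapArc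
  split_ifs with hd0
  · subst hd0
    rw [emod_eq_add_of_neg (by omega) (by omega), mem_erase, not_and_or, not_not,
      or_iff_left (not_not.mpr (toSigned_mem_signedRange j))]
    rcases lt_or_ge (toSigned N j - -(((0 : ℕ) : ℤ) / 2) - 1) 0 with h | h
    · rw [emod_eq_add_of_neg (by omega) h]; omega
    · rw [Int.emod_eq_of_lt h (by omega)]; omega
  · rw [Int.emod_eq_of_lt (by omega) (by omega), mem_Ioo]
    rcases lt_or_ge (toSigned N j - -((d : ℤ) / 2) - 1) 0 with h | h
    · rw [emod_eq_add_of_neg (by omega) h]; omega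
    · rw [Int.emod_eq_of_lt h (by omega)]; omega

lemma exists_gapEnds_mem_gapArc {d d' : ℕ} (hdd : d < d') (hd' : d' < N) :
    ∃ t, t ∈ gapEnds d ∧ t ∈ gapArc N d' ∨ t ∈ gapEnds d' ∧ t ∈ gapArc N d := by
  by_cases hd0 : d = 0
  · refine ⟨((d' : ℤ) + 1) / 2, Or.inr ⟨by simp [gapEnds], ?_⟩⟩
    rw [gapArc, if_pos hd0, mem_erase]
    exact ⟨by omega, half_succ_mem_signedRange hd'⟩
  · simp only [gapEnds, gapArc, if_neg (show d' ≠ 0 by omega), mem_insert, mem_singleton, mem_Ioo]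
    by_cases h : (d : ℤ) / 2 < (d' : ℤ) / 2
    · exact ⟨-((d : ℤ) / 2), Or.inl ⟨Or.inl rfl, by omega⟩⟩
    · exact ⟨((d : ℤ) + 1) / 2, Or.inl ⟨Or.inr rfl, by omega⟩⟩

/-- With `v = 1 + y ∘ toSigned` the support is `{t | y t = 0}`: both points of the pair with
gap `d` are in it, and no point strictly between them. -/
def IsParentalGap (N : ℕ) (y : ℤ → ZMod 2) (d : ℕ) : Prop :=
  (∀ t ∈ gapEnds d, y t = 0) ∧ ∀ t ∈ gapArc N d, y t = 1

section Event

variable (y : ℤ → ZMod 2)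

lemma isNextInSupp_iff {x z : Fin N} {d : ℕ} (hd : d < N) (hx : toSigned N x = -((d : ℤ) / 2))
    (hz : toSigned N z = ((d : ℤ) + 1) / 2) :
    IsNextInSupp (fun i => 1 + y (toSigned N i)) x z ↔ IsParentalGap N y d := by
  simp only [IsNextInSupp, IsParentalGap, zmod2_one_add_eq_one_iff, subN_le_subN_iff hd hx hz, hx,
    hz, gapEnds, mem_insert, mem_singleton, forall_eq_or_imp, forall_eq, and_assoc]
  refine and_congr_right fun _ => and_congr_right fun _ => ⟨fun h t ht => ?_, fun h j hj hj' => ?_⟩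
  · obtain ⟨j, rfl⟩ := exists_toSigned_eq (gapArc_subset hd ht)
    exact (zmod2_eq_zero_or_eq_one _).resolve_left fun h0 => h j h0 ht
  · rw [h _ hj'] at hj
    exact one_ne_zero hj

lemma G_eq_one_iff (hN : 0 < N) : G N y = 1 ↔ ∃ d < N, IsParentalGap N y d := by
  rw [G, dif_pos hN, Bav_zero_eq_one_iff]
  constructor
  · rintro ⟨x, z, hxz, h0⟩
    obtain ⟨d, hd, hx, hz⟩ := (av_eq_zero_iff x z).mp h0
    exact ⟨d, hd, (isNextInSupp_iff y hd hx hz).mp hxz⟩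
  · rintro ⟨d, hd, hy⟩
    obtain ⟨x, hx⟩ := exists_toSigned_eq (neg_half_mem_signedRange hd)
    obtain ⟨z, hz⟩ := exists_toSigned_eq (half_succ_mem_signedRange hd)
    exact ⟨x, z, (isNextInSupp_iff y hd hx hz).mpr hy, (av_eq_zero_iff x z).mpr ⟨d, hd, hx, hz⟩⟩

variable {y}

lemma IsParentalGap.not_of_lt {d d' : ℕ} (hdd : d < d') (hd' : d' < N) (h : IsParentalGap N y d) :
    ¬ IsParentalGap N y d' := by
  intro h'
  obtain ⟨t, ⟨hend, harc⟩ | ⟨hend, harc⟩⟩ := exists_gapEnds_mem_gapArc hdd hd'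
  · exact zero_ne_one ((h.1 t hend).symm.trans (h'.2 t harc))
  · exact zero_ne_one ((h'.1 t hend).symm.trans (h.2 t harc))

lemma IsParentalGap.eq {d d' : ℕ} (hd : d < N) (hd' : d' < N) (h : IsParentalGap N y d)
    (h' : IsParentalGap N y d') : d = d' := by
  rcases lt_trichotomy d d' with hlt | heq | hgt
  · exact absurd h' (h.not_of_lt hlt hd')
  · exact heq
  · exact absurd h (h'.not_of_lt hgt hd)

end Event

section Recurrence

variable (y : ℤ → ZMod 2)

lemma prod_Icc_eq_mul_prod_Icc {a b : ℤ} (h : a ≤ b) :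
    ∏ t ∈ Icc a b, y t = y a * ∏ t ∈ Icc (a + 1) b, y t := by
  rw [← insert_Icc_add_one_left_eq_Icc h, prod_insert (by simp)]

lemma prod_Icc_eq_prod_Icc_mul {a b : ℤ} (h : a ≤ b) :
    ∏ t ∈ Icc a b, y t = (∏ t ∈ Icc a (b - 1), y t) * y b := by
  rw [← insert_Icc_sub_one_right_eq_Icc h, prod_insert (by simp), mul_comm]

lemma prod_Icc_erase_zero {a b : ℤ} (ha : a ≤ 0) (hb : 0 ≤ b) :
    ∏ t ∈ (Icc a b).erase 0, y t = (∏ t ∈ Icc a (-1), y t) * ∏ t ∈ Icc 1 b, y t := by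
  have hsplit : (Icc a b).erase 0 = Icc a (-1) ∪ Icc 1 b := by
    ext t; simp only [mem_erase, mem_Icc, mem_union]; omega
  rw [hsplit, prod_union (disjoint_left.mpr fun t => by simp only [mem_Icc]; omega)]

lemma prod_Ioo_eq {a b : ℤ} (ha : a < 0) (hb : 0 < b) :
    ∏ t ∈ Ioo a b, y t = (∏ t ∈ Icc (a + 1) (-1), y t) * y 0 * ∏ t ∈ Icc 1 (b - 1), y t := by
  have herase : (Ioo a b).erase 0 = (Icc (a + 1) (b - 1)).erase 0 := by
    ext t; simp only [mem_erase, mem_Ioo, mem_Icc]; omega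
  rw [← mul_prod_erase _ _ (mem_Ioo.mpr ⟨ha, hb⟩), herase,
    prod_Icc_erase_zero y (by omega) (by omega)]
  ring

noncomputable def gapTerm (N : ℕ) (y : ℤ → ZMod 2) (d : ℕ) : ZMod 2 :=
  (∏ t ∈ gapEnds d, (1 + y t)) * ∏ t ∈ gapArc N d, y t

lemma gapTerm_eq_one_iff (d : ℕ) : gapTerm N y d = 1 ↔ IsParentalGap N y d := by
  simp only [gapTerm, IsParentalGap, zmod2_mul_eq_one_iff, zmod2_prod_eq_one_iff,
    zmod2_one_add_eq_one_iff]

lemma G_eq_sum_gapTerm (hN : 0 < N) : G N y = ∑ d ∈ range N, gapTerm N y d := by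
  refine zmod2_eq_of_eq_one_iff ?_
  rw [G_eq_one_iff y hN, zmod2_sum_eq_one_iff fun d hd d' hd' h h' =>
    ((gapTerm_eq_one_iff y d).mp h).eq (mem_range.mp hd) (mem_range.mp hd')
      ((gapTerm_eq_one_iff y d').mp h')]
  simp only [mem_range, gapTerm_eq_one_iff]

lemma gapTerm_zero {a b : ℤ} (hN : 0 < N) (ha : -(((N : ℤ) - 1) / 2) = a)
    (hb : (N : ℤ) / 2 = b) :
    gapTerm N y 0 = (1 + y 0) * ((∏ t ∈ Icc a (-1), y t) * ∏ t ∈ Icc 1 b, y t) := by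
  rw [gapTerm, gapArc, if_pos rfl, signedRange, ha, hb,
    prod_Icc_erase_zero y (by omega) (by omega)]
  simp [gapEnds]

lemma gapTerm_of_pos {d : ℕ} {a b : ℤ} (hd : 0 < d) (ha : -((d : ℤ) / 2) = a)
    (hb : ((d : ℤ) + 1) / 2 = b) :
    gapTerm N y d = (1 + y a) * (1 + y b) * ∏ t ∈ Ioo a b, y t := by
  rw [gapTerm, gapEnds, prod_pair (by omega), gapArc, if_neg hd.ne', ha, hb]

lemma gapTerm_eq_gapTerm_of_ne_zero {d : ℕ} (hd : d ≠ 0) (M : ℕ) :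
    gapTerm N y d = gapTerm M y d := by
  simp only [gapTerm, gapArc, if_neg hd]

/-- Only the terms with `d = 0`, whose arc is all of `Z_{N,±} \ {0}`, depend on `N`. -/
lemma G_succ (hN : 0 < N) :
    G (N + 1) y = G N y - gapTerm N y 0 + gapTerm (N + 1) y 0 + gapTerm (N + 1) y N := by
  obtain ⟨n, rfl⟩ : ∃ n, N = n + 1 := ⟨N - 1, by omega⟩
  rw [G_eq_sum_gapTerm y hN, G_eq_sum_gapTerm y (by omega : 0 < n + 1 + 1),
    sum_range_succ _ (n + 1), sum_range_succ', sum_range_succ' (gapTerm (n + 1) y)]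
  simp only [gapTerm_eq_gapTerm_of_ne_zero y (Nat.succ_ne_zero _) (n + 1 + 1)]
  ring

lemma G_two_mul {m : ℕ} (hm : 2 ≤ m) :
    G (2 * m) y = G (2 * m - 1) y +
      (∏ k ∈ Icc (-(m : ℤ) + 2) (-1), y k) * (∏ k ∈ Icc (1 : ℤ) ((m : ℤ) - 1), y k) *
        (y (m : ℤ) + 1) * (y 0 + y (-(m : ℤ) + 1)) := by
  have h := G_succ y (N := 2 * m - 1) (by omega)
  rw [show 2 * m - 1 + 1 = 2 * m by omega] at h
  rw [h, gapTerm_zero y (a := -m + 1) (b := m - 1) (by omega) (by omega) (by omega),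
    gapTerm_zero y (a := -m + 1) (b := m) (by omega) (by omega) (by omega),
    gapTerm_of_pos y (a := -m + 1) (b := m) (by omega) (by omega) (by omega),
    prod_Ioo_eq y (by omega) (by omega), prod_Icc_eq_mul_prod_Icc y (by omega : -(m : ℤ) + 1 ≤ -1),
    prod_Icc_eq_prod_Icc_mul y (by omega : (1 : ℤ) ≤ m), show -(m : ℤ) + 1 + 1 = -m + 2 by ring]
  ring_nf
  reduce_mod_char

lemma G_two_mul_add_one {m : ℕ} (hm : 1 ≤ m) :
    G (2 * m + 1) y = G (2 * m) y +
      (∏ k ∈ Icc (-(m : ℤ) + 1) (-1), y k) * (∏ k ∈ Icc (1 : ℤ) ((m : ℤ) - 1), y k) *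
        (y (-(m : ℤ)) + 1) * (y 0 + y (m : ℤ)) := by
  rw [G_succ y (by omega : 0 < 2 * m),
    gapTerm_zero y (a := -m + 1) (b := m) (by omega) (by omega) (by omega),
    gapTerm_zero y (a := -m) (b := m) (by omega) (by omega) (by omega),
    gapTerm_of_pos y (a := -m) (b := m) (by omega) (by omega) (by omega),
    prod_Ioo_eq y (by omega) (by omega), prod_Icc_eq_mul_prod_Icc y (by omega : -(m : ℤ) ≤ -1),
    prod_Icc_eq_prod_Icc_mul y (by omega : (1 : ℤ) ≤ m)]
  ring_nf
  reduce_mod_char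

end Recurrence

end Rhythm

open Rhythm in
/-- `G_N` only reads `y` on `Z_{N,±}`, so using the same `y : ℤ → F_2` on both sides
realizes the restriction `y'`. -/
theorem Bav_zero_recurrence (m : ℕ) (hm : 2 ≤ m) (y : ℤ → ZMod 2) :
    G (2 * m) y =
      G (2 * m - 1) y +
        (∏ k ∈ Finset.Icc (-(m : ℤ) + 2) (-1), y k) *
          (∏ k ∈ Finset.Icc (1 : ℤ) ((m : ℤ) - 1), y k) *
            (y (m : ℤ) + 1) * (y 0 + y (-(m : ℤ) + 1)) ∧
    G (2 * m + 1) y =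
      G (2 * m) y +
        (∏ k ∈ Finset.Icc (-(m : ℤ) + 1) (-1), y k) *
          (∏ k ∈ Finset.Icc (1 : ℤ) ((m : ℤ) - 1), y k) *
            (y (-(m : ℤ)) + 1) * (y 0 + y (m : ℤ)) :=
  ⟨G_two_mul y hm, G_two_mul_add_one y (by omega)⟩
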